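/- arXiv:2010.05053 — 2 statements merged into one kernel-verified Lean document; each statement's English description precedes it below -/
import Mathlib

section
/- Let Q be a polytope and H an affine hyperplane containing no vertex of Q. If F is a face of Q that meets H, then F is not contained in H, H meets the relative interior of F, and dim(F ∩ H) = dim(F) − 1. -/
/-! Extreme points of a polytope are exposed, so no extreme point of the face `F` lies on
`H = {f = 0}`. Since `F` is the convex hull of its extreme points and meets `H`, `f` takes both
signs on them; walking from a relative interior point of `F` towards an extreme point on the other
side of `H` crosses `H` inside the relative interior. Around that crossing point `F` fills its
affine span, so the direction of the affine span of `F ∩ H` is that of `F` intersected with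
`ker f`, a hyperplane in it because `f` is not constant on `F`. -/

open Set Classical

/-- Points of `ℝ^N`. -/
abbrev Pt (N : ℕ) := EuclideanSpace ℝ (Fin N)

/-- A polytope: the convex hull of a finite set of points. -/
def IsPolytope {N : ℕ} (Q : Set (Pt N)) : Prop :=
  ∃ S : Set (Pt N), S.Finite ∧ Q = convexHull ℝ S

/-- Dimension of a subset of `ℝ^N`: the dimension of its affine span,
with the empty set having dimension `-1`. -/
noncomputable def faceDim {N : ℕ} (s : Set (Pt N)) : ℤ :=
  if s = ∅ then -1 else (Module.finrank ℝ (affineSpan ℝ s).direction : ℤ)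

/-- A face of a polytope: an exposed subset (this includes `∅` and the polytope itself). -/
def IsFaceOf {N : ℕ} (Q F : Set (Pt N)) : Prop :=
  IsExposed ℝ Q F

/-- A `k`-face: a face of dimension `k`. -/
def IsKFaceOf {N : ℕ} (k : ℕ) (Q F : Set (Pt N)) : Prop :=
  IsFaceOf Q F ∧ faceDim F = k

/-- A vertex: a point spanning a `0`-dimensional face. -/
def IsVertexOf {N : ℕ} (Q : Set (Pt N)) (v : Pt N) : Prop :=
  IsKFaceOf 0 Q {v}

/-- An affine hyperplane: the zero set of a nonconstant affine functional. -/
def IsHyperplane {N : ℕ} (H : Set (Pt N)) : Prop :=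
  ∃ f : Pt N →ᵃ[ℝ] ℝ, f.linear ≠ 0 ∧ H = {x | f x = 0}

open Filter Topology AffineMap

section IntrinsicInterior

variable {E : Type*} [NormedAddCommGroup E] [NormedSpace ℝ E] {s : Set E} {x y w : E}

theorem mem_intrinsicInterior_iff_mem_nhdsWithin :
    x ∈ intrinsicInterior ℝ s ↔ x ∈ affineSpan ℝ s ∧ s ∈ 𝓝[affineSpan ℝ s] x := by
  constructor
  · rintro ⟨x, hx, rfl⟩
    exact ⟨x.2, preimage_coe_mem_nhds_subtype.1 (mem_interior_iff_mem_nhds.1 hx)⟩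
  · rintro ⟨hxA, hs⟩
    exact ⟨⟨x, hxA⟩, mem_interior_iff_mem_nhds.2 (preimage_coe_mem_nhds_subtype.2 hs), rfl⟩

/-- The homothety of ratio `(1 - t)⁻¹` centred at `y` maps `lineMap x y t` back to `x`; it
preserves the affine span of `s`, and by convexity its preimage of `s` lies in `s`. -/
theorem Convex.lineMap_mem_intrinsicInterior (hs : Convex ℝ s) (hx : x ∈ intrinsicInterior ℝ s)
    (hy : y ∈ s) {t : ℝ} (ht₀ : 0 ≤ t) (ht₁ : t < 1) :
    lineMap x y t ∈ intrinsicInterior ℝ s := by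
  obtain ⟨hxA, hxs⟩ := mem_intrinsicInterior_iff_mem_nhdsWithin.1 hx
  have ht : 1 - t ≠ 0 := by linarith
  have hA (r : ℝ) : MapsTo (homothety y r) (affineSpan ℝ s) (affineSpan ℝ s) := fun p hp => by
    simpa only [homothety_eq_lineMap, SetLike.mem_coe] using
      AffineMap.lineMap_mem r (subset_affineSpan ℝ s hy) hp
  rw [← lineMap_apply_one_sub, ← homothety_eq_lineMap]
  have hgs : homothety y (1 - t)⁻¹ ⁻¹' s ∈ 𝓝[affineSpan ℝ s] (homothety y (1 - t) x) :=
    (homothety_continuous y _).continuousWithinAt.tendsto_nhdsWithin (hA _) (by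
      rwa [← homothety_mul_apply, inv_mul_cancel₀ ht, homothety_one, id_apply])
  refine mem_intrinsicInterior_iff_mem_nhdsWithin.2
    ⟨hA _ hxA, mem_of_superset hgs fun p hp => ?_⟩
  have hp' := hs.lineMap_mem hy hp (t := 1 - t) ⟨by linarith, by linarith⟩
  rwa [← homothety_eq_lineMap, ← homothety_mul_apply, mul_inv_cancel₀ ht, homothety_one,
    id_apply] at hp'

theorem Convex.exists_mem_intrinsicInterior_apply_eq_zero [FiniteDimensional ℝ E]
    (hs : Convex ℝ s) (f : E →ᵃ[ℝ] ℝ) (hx : x ∈ s) (hy : y ∈ s) (hfx : 0 < f x) (hfy : f y < 0) :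
    ∃ z ∈ intrinsicInterior ℝ s, f z = 0 := by
  obtain ⟨c, hc⟩ := Set.Nonempty.intrinsicInterior hs ⟨x, hx⟩
  have key : ∀ g : E →ᵃ[ℝ] ℝ, ∀ b ∈ s, 0 ≤ g c → g b < 0 →
      ∃ z ∈ intrinsicInterior ℝ s, g z = 0 := fun g b hb hgc hgb => by
    have hd : 0 < g c - g b := by linarith
    refine ⟨lineMap c b (g c / (g c - g b)), hs.lineMap_mem_intrinsicInterior hc hb
      (by positivity) ((div_lt_one hd).2 (by linarith)), ?_⟩
    rw [apply_lineMap, lineMap_apply_ring']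
    field_simp
    ring
  rcases le_total 0 (f c) with hfc | hfc
  · exact key f y hy hfc hfy
  · obtain ⟨z, hz, hfz⟩ := key (-f) x hx (by simpa using hfc) (by simpa using hfx)
    exact ⟨z, hz, by simpa using hfz⟩

/-- Near a point of the relative interior `s` fills its affine span, so small multiples of a
direction in `ker f.linear` carry that point to points of `s ∩ {f = 0}`. -/
theorem direction_affineSpan_inter_setOf_apply_eq_zero {F : Type*} [AddCommGroup F] [Module ℝ F]
    (f : E →ᵃ[ℝ] F) (hw : w ∈ intrinsicInterior ℝ s) (hfw : f w = 0) :
    (affineSpan ℝ (s ∩ {x | f x = 0})).direction =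
      (affineSpan ℝ s).direction ⊓ LinearMap.ker f.linear := by
  refine le_antisymm
    (le_inf (AffineSubspace.direction_le (affineSpan_mono ℝ inter_subset_left)) ?_) ?_
  · rw [direction_affineSpan, vectorSpan_def, Submodule.span_le]
    rintro _ ⟨p, ⟨-, hp : f p = 0⟩, q, ⟨-, hq : f q = 0⟩, rfl⟩
    rw [SetLike.mem_coe, LinearMap.mem_ker, AffineMap.linearMap_vsub, hp, hq, vsub_self]
  · rintro v ⟨hvA, hvf⟩
    obtain ⟨hwA, hws⟩ := mem_intrinsicInterior_iff_mem_nhdsWithin.1 hw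
    have hline : Tendsto (fun t : ℝ => t • v + w) (𝓝 0) (𝓝[affineSpan ℝ s] w) := by
      refine tendsto_nhdsWithin_iff.2 ⟨?_, Eventually.of_forall fun t => ?_⟩
      · exact (by fun_prop : Continuous fun t : ℝ => t • v + w).tendsto' 0 w (by simp)
      · simpa only [vadd_eq_add, SetLike.mem_coe] using
          AffineSubspace.vadd_mem_of_mem_direction (Submodule.smul_mem _ t hvA) hwA
    obtain ⟨t, hts, ht⟩ := ((hline.eventually hws).filter_mono nhdsWithin_le_nhds).and
      self_mem_nhdsWithin |>.exists (f := 𝓝[≠] (0 : ℝ))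
    have htH : f (t • v + w) = 0 := by
      rw [← vadd_eq_add, f.map_vadd, map_smul, LinearMap.mem_ker.1 hvf, hfw, smul_zero, zero_vadd]
    have hwH : w ∈ s ∩ {x | f x = 0} := ⟨intrinsicInterior_subset hw, hfw⟩
    have htvH : t • v + w ∈ s ∩ {x | f x = 0} := ⟨hts, htH⟩
    have := vsub_mem_vectorSpan ℝ htvH hwH
    rw [direction_affineSpan]
    simpa [smul_smul, inv_mul_cancel₀ (show t ≠ 0 from ht)] using
      Submodule.smul_mem _ t⁻¹ this

end IntrinsicInterior

theorem Submodule.finrank_inf_ker_add_one {K V : Type*} [Field K] [AddCommGroup V] [Module K V]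
    (p : Submodule K V) [FiniteDimensional K p] (f : V →ₗ[K] K) (hp : ¬ p ≤ LinearMap.ker f) :
    Module.finrank K ↥(p ⊓ LinearMap.ker f) + 1 = Module.finrank K p := by
  have hf : f.domRestrict p ≠ 0 := fun h => hp fun v hv => by
    simpa using LinearMap.congr_fun h ⟨v, hv⟩
  rw [← Submodule.map_comap_subtype, Submodule.finrank_map_subtype_eq, ← LinearMap.ker_domRestrict,
    Module.Dual.finrank_ker_add_one_of_ne_zero hf]

theorem AffineMap.exists_pos_of_mem_convexHull {E : Type*} [AddCommGroup E] [Module ℝ E]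
    {s : Set E} {z : E} (f : E →ᵃ[ℝ] ℝ) (hs : ∀ y ∈ s, f y ≠ 0) (hz : z ∈ convexHull ℝ s)
    (hfz : f z = 0) : ∃ y ∈ s, 0 < f y := by
  by_contra! h
  have hneg : convexHull ℝ s ⊆ f ⁻¹' Iio 0 :=
    convexHull_min (fun y hy => (h y hy).lt_of_ne (hs y hy)) ((convex_Iio 0).affine_preimage f)
  exact (hneg hz).ne hfz

section Polytope

variable {E : Type*} [NormedAddCommGroup E] [NormedSpace ℝ E] {S B : Set E}

theorem IsExtreme.extremePoints_subset_of_convexHull (hB : IsExtreme ℝ (convexHull ℝ S) B) :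
    B.extremePoints ℝ ⊆ S :=
  fun _ he => extremePoints_convexHull_subset (hB.extremePoints_subset_extremePoints he)

theorem IsExposed.convexHull_extremePoints_of_finite (hS : S.Finite)
    (hB : IsExposed ℝ (convexHull ℝ S) B) : convexHull ℝ (B.extremePoints ℝ) = B := by
  have hfin : (B.extremePoints ℝ).Finite :=
    hS.subset hB.isExtreme.extremePoints_subset_of_convexHull
  have := closure_convexHull_extremePoints (hB.isCompact (hS.isCompact_convexHull (𝕜 := ℝ)))
    (hB.convex (convex_convexHull ℝ S))
  rwa [(hfin.isCompact_convexHull (𝕜 := ℝ)).isClosed.closure_eq] at this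

/-- A functional separating `v` from the hull of the other points of `S` exposes a face whose
extreme points all lie in `S`, hence equal `v`. -/
theorem isExposed_singleton_of_mem_extremePoints_convexHull (hS : S.Finite) {v : E}
    (hv : v ∈ (convexHull ℝ S).extremePoints ℝ) : IsExposed ℝ (convexHull ℝ S) {v} := by
  have hvS : v ∈ S := extremePoints_convexHull_subset hv
  have hv' : v ∉ convexHull ℝ (S \ {v}) := fun h =>
    ((convex_convexHull ℝ S).mem_extremePoints_iff_mem_sdiff_convexHull_sdiff.1 hv).2
      (convexHull_mono (sdiff_subset_sdiff_left (subset_convexHull ℝ S)) h)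
  obtain ⟨l, c, hlc, hcv⟩ := geometric_hahn_banach_closed_point (convex_convexHull ℝ _)
    ((hS.subset sdiff_subset).isCompact_convexHull (𝕜 := ℝ)).isClosed hv'
  have hlS : ∀ y ∈ S, y ≠ v → l y < l v := fun y hy hne =>
    (hlc y (subset_convexHull ℝ _ ⟨hy, hne⟩)).trans hcv
  have hB : IsExposed ℝ (convexHull ℝ S) (l.toExposed (convexHull ℝ S)) :=
    ContinuousLinearMap.toExposed.isExposed
  have hvB : v ∈ l.toExposed (convexHull ℝ S) :=
    ⟨subset_convexHull ℝ S hvS, fun y hy => convexHull_min (t := l ⁻¹' Iic (l v))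
      (fun y hy => show l y ≤ l v by
        rcases eq_or_ne y v with rfl | hne; exacts [le_rfl, (hlS y hy hne).le])
      ((convex_Iic _).linear_preimage l.toLinearMap) hy⟩
  have hext : (l.toExposed (convexHull ℝ S)).extremePoints ℝ ⊆ {v} := fun e he => by
    by_contra hne
    exact (hlS e (hB.isExtreme.extremePoints_subset_of_convexHull he) hne).not_ge
      (he.1.2 v (subset_convexHull ℝ S hvS))
  convert hB
  refine Subset.antisymm (singleton_subset_iff.2 hvB) ?_
  rw [← hB.convexHull_extremePoints_of_finite hS]
  exact (convexHull_mono hext).trans (convexHull_singleton v).subset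

end Polytope

theorem faceDim_singleton {N : ℕ} (v : Pt N) : faceDim {v} = 0 := by
  simp [faceDim, direction_affineSpan, vectorSpan_singleton]

theorem faceDim_of_nonempty {N : ℕ} {s : Set (Pt N)} (hs : s.Nonempty) :
    faceDim s = Module.finrank ℝ (affineSpan ℝ s).direction := if_neg hs.ne_empty

/-- If `H` is a hyperplane containing no vertex of the polytope
`Q` and `F` is a face of `Q` meeting `H`, then `F ⊄ H`, `H` meets the relative
interior of `F`, and `dim (F ∩ H) = dim F - 1`. -/
theorem dim_face_inter_hyperplane {N : ℕ} (Q H F : Set (Pt N))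
    (hQ : IsPolytope Q) (hH : IsHyperplane H)
    (hv : ∀ v : Pt N, IsVertexOf Q v → v ∉ H)
    (hF : IsFaceOf Q F) (hFH : (F ∩ H).Nonempty) :
    ¬ F ⊆ H ∧ (H ∩ intrinsicInterior ℝ F).Nonempty ∧
      faceDim (F ∩ H) = faceDim F - 1 := by
  obtain ⟨S, hS, rfl⟩ := hQ
  obtain ⟨f, -, rfl⟩ := hH
  have ⟨z, hzF, hfz⟩ := hFH
  have hE : ∀ e ∈ F.extremePoints ℝ, f e ≠ 0 := fun e he => hv e
    ⟨isExposed_singleton_of_mem_extremePoints_convexHull hS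
      (hF.isExtreme.extremePoints_subset_extremePoints he), faceDim_singleton e⟩
  have hzE : z ∈ convexHull ℝ (F.extremePoints ℝ) := by
    rwa [IsExposed.convexHull_extremePoints_of_finite hS hF]
  have hFconv : Convex ℝ F := hF.convex (convex_convexHull ℝ S)
  obtain ⟨a, haE, hfa⟩ := f.exists_pos_of_mem_convexHull hE hzE hfz
  obtain ⟨b, hbE, hfb⟩ := (-f).exists_pos_of_mem_convexHull (by simpa using hE) hzE
    (by simpa using hfz)
  obtain ⟨w, hw, hfw⟩ :=
    hFconv.exists_mem_intrinsicInterior_apply_eq_zero f haE.1 hbE.1 hfa (by simpa using hfb)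
  have hD : ¬ (affineSpan ℝ F).direction ≤ LinearMap.ker f.linear := fun h => by
    have := LinearMap.mem_ker.1 <| h <| AffineSubspace.vsub_mem_direction
      (subset_affineSpan ℝ F haE.1) (subset_affineSpan ℝ F (intrinsicInterior_subset hw))
    rw [AffineMap.linearMap_vsub, hfw, vsub_eq_sub, sub_zero] at this
    exact hfa.ne' this
  refine ⟨fun hFH' => hE a haE (hFH' haE.1), ⟨w, hfw, hw⟩, ?_⟩
  rw [faceDim_of_nonempty hFH, faceDim_of_nonempty ⟨z, hzF⟩,
    direction_affineSpan_inter_setOf_apply_eq_zero f hw hfw,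
    ← Submodule.finrank_inf_ker_add_one _ _ hD]
  push_cast
  ring
end

section
/- Let F and G be two distinct k-faces of a polytope Q with k ≥ 1, let f and g be points in the relative interiors of F and G respectively, and let L be the affine line through f and g. Then L does not meet any face of Q of dimension at most k other than F and G; in particular, for any k-face R of Q distinct from F and G, L ∩ R = ∅, and L contains no vertex of Q. -/
open Set Classical

/-!
A face `A` of dimension at most `k` that meets the relative interior of a `k`-face `F` must
contain `F` (extremality), hence have the same affine span, hence equal `F`. Now let `x` be a
point of the line through `f` and `g` lying in a face `A` of dimension at most `k`. Of the three
collinear points `x, f, g` one lies between the other two. If `x` lies between `f` and `g`,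
then `A` contains `f` or `g`, so `A = F` or `A = G`. If `f` lies strictly between `x` and `g`,
then `F` contains `g`, which forces `F = G`; symmetrically for `g`.
-/

open Filter Topology

theorem IsExtreme.right_mem_of_wbtw {E : Type*} [AddCommGroup E] [Module ℝ E]
    {A B : Set E} {a b c : E} (hB : IsExtreme ℝ A B) (ha : a ∈ A) (hc : c ∈ A) (hb : b ∈ B)
    (habc : Wbtw ℝ a b c) (hba : b ≠ a) : c ∈ B := by
  have hseg := mem_segment_iff_wbtw.mpr habc
  rw [← insert_endpoints_openSegment] at hseg
  rcases hseg with rfl | rfl | hopen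
  · exact absurd rfl hba
  · exact hb
  · exact hB.right_mem_of_mem_openSegment ha hc hb hopen

section Normed

variable {E : Type*} [NormedAddCommGroup E] [NormedSpace ℝ E] {Q A F : Set E} {x : E}

theorem exists_mem_openSegment_of_mem_intrinsicInterior {y : E}
    (hx : x ∈ intrinsicInterior ℝ F) (hy : y ∈ affineSpan ℝ F) :
    ∃ z ∈ F, x ∈ openSegment ℝ y z := by
  obtain ⟨p, hp, rfl⟩ := mem_intrinsicInterior.mp hx
  let c : ℝ → affineSpan ℝ F := fun s ↦
    ⟨AffineMap.lineMap y p s, AffineMap.lineMap_mem _ hy p.2⟩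
  have hc1 : c 1 = p := by ext; simp [c]
  have hev : ∀ᶠ s in 𝓝[>] (1 : ℝ), c s ∈ interior (Subtype.val ⁻¹' F) :=
    nhdsWithin_le_nhds <| (show Continuous c by fun_prop).continuousAt.preimage_mem_nhds
      (hc1 ▸ isOpen_interior.mem_nhds hp)
  obtain ⟨s, hs, hs1⟩ := (hev.and self_mem_nhdsWithin).exists
  have hs0 : (0 : ℝ) < s := one_pos.trans hs1
  refine ⟨c s, interior_subset (s := Subtype.val ⁻¹' F) hs, ?_⟩
  rw [openSegment_eq_image_lineMap]
  exact ⟨s⁻¹, ⟨inv_pos.mpr hs0, inv_lt_one_of_one_lt₀ hs1⟩,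
    by simp [c, inv_mul_cancel₀ hs0.ne']⟩

theorem IsExtreme.subset_of_mem_intrinsicInterior (hA : IsExtreme ℝ Q A) (hFQ : F ⊆ Q)
    (hx : x ∈ intrinsicInterior ℝ F) (hxA : x ∈ A) : F ⊆ A := fun y hy ↦ by
  obtain ⟨z, hz, hxyz⟩ := exists_mem_openSegment_of_mem_intrinsicInterior hx
    (subset_affineSpan ℝ F hy)
  exact hA.left_mem_of_mem_openSegment (hFQ hy) (hFQ hz) hxA hxyz

theorem IsExtreme.subset_of_subset_affineSpan (hF : IsExtreme ℝ Q F) (hAQ : A ⊆ Q)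
    (hx : x ∈ intrinsicInterior ℝ F) (hA : A ⊆ affineSpan ℝ F) : A ⊆ F := fun a ha ↦ by
  obtain ⟨z, hz, hxaz⟩ := exists_mem_openSegment_of_mem_intrinsicInterior hx (hA ha)
  exact hF.left_mem_of_mem_openSegment (hAQ ha) (hF.subset hz)
    (intrinsicInterior_subset hx) hxaz

theorem IsExtreme.eq_of_mem_intrinsicInterior [FiniteDimensional ℝ E]
    (hA : IsExtreme ℝ Q A) (hF : IsExtreme ℝ Q F)
    (hx : x ∈ intrinsicInterior ℝ F) (hxA : x ∈ A)
    (hdim : Module.finrank ℝ (affineSpan ℝ A).direction ≤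
      Module.finrank ℝ (affineSpan ℝ F).direction) : A = F := by
  have hFA : F ⊆ A := hA.subset_of_mem_intrinsicInterior hF.subset hx hxA
  have hspan : affineSpan ℝ F = affineSpan ℝ A :=
    AffineSubspace.eq_of_direction_eq_of_nonempty_of_le
      (Submodule.eq_of_le_of_finrank_le
        (AffineSubspace.direction_le (affineSpan_mono ℝ hFA)) hdim)
      ((affineSpan_nonempty ℝ).mpr ⟨x, intrinsicInterior_subset hx⟩) (affineSpan_mono ℝ hFA)
  refine (hF.subset_of_subset_affineSpan hA.subset hx ?_).antisymm hFA
  exact hspan ▸ subset_affineSpan ℝ A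

end Normed

theorem IsExtreme.eq_of_faceDim_le {N : ℕ} {Q A F : Set (Pt N)} {x : Pt N}
    (hA : IsExtreme ℝ Q A) (hF : IsExtreme ℝ Q F)
    (hx : x ∈ intrinsicInterior ℝ F) (hxA : x ∈ A) (hdim : faceDim A ≤ faceDim F) :
    A = F := by
  rw [faceDim, faceDim, if_neg (nonempty_of_mem hxA).ne_empty,
    if_neg (nonempty_of_mem (intrinsicInterior_subset hx)).ne_empty, Nat.cast_le] at hdim
  exact hA.eq_of_mem_intrinsicInterior hF hx hxA hdim

theorem face_eq_or_eq_of_mem_line {N k : ℕ} {Q F G A : Set (Pt N)} {f g x : Pt N}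
    (hF : IsExtreme ℝ Q F) (hG : IsExtreme ℝ Q G) (hA : IsExtreme ℝ Q A)
    (hFdim : faceDim F = k) (hGdim : faceDim G = k) (hAdim : faceDim A ≤ k) (hFG : F ≠ G)
    (hf : f ∈ intrinsicInterior ℝ F) (hg : g ∈ intrinsicInterior ℝ G)
    (hx : x ∈ line[ℝ, f, g]) (hxA : x ∈ A) : A = F ∨ A = G := by
  have eq_F {B} (hB : IsExtreme ℝ Q B) (hBdim : faceDim B ≤ k) (hfB : f ∈ B) : B = F :=
    hB.eq_of_faceDim_le hF hf hfB (hFdim ▸ hBdim)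
  have eq_G {B} (hB : IsExtreme ℝ Q B) (hBdim : faceDim B ≤ k) (hgB : g ∈ B) : B = G :=
    hB.eq_of_faceDim_le hG hg hgB (hGdim ▸ hBdim)
  have hfF := intrinsicInterior_subset hf
  have hgG := intrinsicInterior_subset hg
  have hxQ := hA.subset hxA
  rcases (collinear_insert_of_mem_affineSpan_pair hx).wbtw_or_wbtw_or_wbtw with
    hxfg | hfgx | hgxf
  · by_cases hfx : f = x
    · exact .inl (eq_F hA hAdim (hfx ▸ hxA))
    · exact absurd (eq_G hF hFdim.le (hF.right_mem_of_wbtw hxQ (hG.subset hgG) hfF hxfg hfx))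
        hFG
  · by_cases hgx : g = x
    · exact .inr (eq_G hA hAdim (hgx ▸ hxA))
    · exact absurd (eq_F hG hGdim.le
        (hG.right_mem_of_wbtw hxQ (hF.subset hfF) hgG hfgx.symm hgx)).symm hFG
  · by_cases hxf : x = f
    · exact .inl (eq_F hA hAdim (hxf ▸ hxA))
    · exact .inr (eq_G hA hAdim
        (hA.right_mem_of_wbtw (hF.subset hfF) (hG.subset hgG) hxA hgxf.symm hxf))

theorem line_avoids_small_faces_general {N k : ℕ} (Q F G : Set (Pt N)) (f g : Pt N)
    (hk : 1 ≤ k)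
    (hF : IsKFaceOf k Q F) (hG : IsKFaceOf k Q G) (hFG : F ≠ G)
    (hf : f ∈ intrinsicInterior ℝ F) (hg : g ∈ intrinsicInterior ℝ G) :
    (∀ A : Set (Pt N), IsFaceOf Q A → faceDim A ≤ (k : ℤ) → A ≠ F → A ≠ G →
      (affineSpan ℝ {f, g} : Set (Pt N)) ∩ A = ∅) ∧
    (∀ R : Set (Pt N), IsKFaceOf k Q R → R ≠ F → R ≠ G →
      (affineSpan ℝ {f, g} : Set (Pt N)) ∩ R = ∅) ∧
    (∀ v : Pt N, IsVertexOf Q v → v ∉ (affineSpan ℝ {f, g} : Set (Pt N))) := by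
  obtain ⟨hFface, hFdim⟩ := hF
  obtain ⟨hGface, hGdim⟩ := hG
  have eq_or_eq {A x} (hA : IsFaceOf Q A) (hAdim : faceDim A ≤ k) (hx : x ∈ line[ℝ, f, g])
      (hxA : x ∈ A) : A = F ∨ A = G :=
    face_eq_or_eq_of_mem_line hFface.isExtreme hGface.isExtreme hA.isExtreme hFdim hGdim
      hAdim hFG hf hg hx hxA
  have avoids (A : Set (Pt N)) (hA : IsFaceOf Q A) (hAdim : faceDim A ≤ k) (hAF : A ≠ F)
      (hAG : A ≠ G) : (line[ℝ, f, g] : Set (Pt N)) ∩ A = ∅ :=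
    eq_empty_of_forall_notMem fun _ ⟨hx, hxA⟩ ↦ (eq_or_eq hA hAdim hx hxA).elim hAF hAG
  refine ⟨avoids, fun R hR ↦ avoids R hR.1 hR.2.le, fun v hv hvL ↦ ?_⟩
  have hv0 : faceDim {v} = 0 := hv.2
  rcases eq_or_eq hv.1 (by omega) hvL rfl with rfl | rfl <;> omega

/-- For distinct `k`-faces `F, G` (`k ≥ 1`) of a polytope `Q`
and relative interior points `f ∈ F`, `g ∈ G`, the line through `f` and `g`
meets no face of `Q` of dimension at most `k` other than `F` and `G`; in
particular it misses every other `k`-face and contains no vertex of `Q`. -/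
theorem line_avoids_small_faces {N k : ℕ} (Q F G : Set (Pt N)) (f g : Pt N)
    (hQ : IsPolytope Q) (hk : 1 ≤ k)
    (hF : IsKFaceOf k Q F) (hG : IsKFaceOf k Q G) (hFG : F ≠ G)
    (hf : f ∈ intrinsicInterior ℝ F) (hg : g ∈ intrinsicInterior ℝ G) :
    (∀ A : Set (Pt N), IsFaceOf Q A → faceDim A ≤ (k : ℤ) → A ≠ F → A ≠ G →
      (affineSpan ℝ {f, g} : Set (Pt N)) ∩ A = ∅) ∧
    (∀ R : Set (Pt N), IsKFaceOf k Q R → R ≠ F → R ≠ G →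
      (affineSpan ℝ {f, g} : Set (Pt N)) ∩ R = ∅) ∧
    (∀ v : Pt N, IsVertexOf Q v → v ∉ (affineSpan ℝ {f, g} : Set (Pt N))) :=
  line_avoids_small_faces_general Q F G f g hk hF hG hFG hf hg
end
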